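/- arXiv:0705.4005 — 5 statements merged into one kernel-verified Lean document; each statement's English description precedes it below -/
import Mathlib

section
/- For every continuously differentiable function v on [0,1], the squared weighted L² norm ∫₀¹ x²v(x)² dx is bounded by (1/2)∫₀¹ x²v'(x)² dx + v(1)². -/
/-!
Since `(x³ v²/3)' = x² v² + (2/3) x³ v v'`, integrating over `[0,1]` gives
`∫ x² v² = v(1)²/3 - (2/3) ∫ x³ v v'`. The cross term is absorbed by
`-2 x³ v v' ≤ 2 x² v² + x⁴ v'²/2 ≤ 2 x² v² + x² v'²/2` on `[0,1]`.
-/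

open MeasureTheory Set

section WeightedPoincare

variable {v v' : ℝ → ℝ}

theorem integral_sq_mul_sq_add_cube_mul_mul_deriv {a b : ℝ} (hab : a ≤ b)
    (hv : ContinuousOn v (Icc a b)) (hv' : ContinuousOn v' (Icc a b))
    (hderiv : ∀ x ∈ Ioo a b, HasDerivAt v (v' x) x) :
    ∫ x in a..b, (x ^ 2 * v x ^ 2 + 2 / 3 * (x ^ 3 * (v x * v' x))) =
      (b ^ 3 * v b ^ 2 - a ^ 3 * v a ^ 2) / 3 := by
  have hprimitive : ∀ x ∈ Ioo a b, HasDerivAt (fun x ↦ x ^ 3 / 3 * v x ^ 2)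
      (x ^ 2 * v x ^ 2 + 2 / 3 * (x ^ 3 * (v x * v' x))) x := by
    intro x hx
    refine (((hasDerivAt_pow 3 x).div_const 3).mul ((hderiv x hx).fun_pow 2)).congr_deriv ?_
    push_cast
    ring
  rw [intervalIntegral.integral_eq_sub_of_hasDerivAt_of_le hab (by fun_prop) hprimitive
    (ContinuousOn.intervalIntegrable_of_Icc hab (by fun_prop))]
  ring

theorem neg_two_mul_pow_three_mul_le {x y z : ℝ} (hx : x ∈ Icc (0 : ℝ) 1) :
    -(2 * (x ^ 3 * (y * z))) ≤ 2 * (x ^ 2 * y ^ 2) + 1 / 2 * (x ^ 2 * z ^ 2) := by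
  have hx2 : x ^ 2 ≤ 1 := by nlinarith [hx.1, hx.2]
  nlinarith [sq_nonneg (2 * x * y + x ^ 2 * z), mul_nonneg (sub_nonneg.2 hx2) (sq_nonneg (x * z))]

theorem integral_sq_mul_sq_le_of_hasDerivAt (hv : ContinuousOn v (Icc 0 1))
    (hv' : ContinuousOn v' (Icc 0 1)) (hderiv : ∀ x ∈ Ioo 0 1, HasDerivAt v (v' x) x) :
    ∫ x in (0 : ℝ)..1, x ^ 2 * v x ^ 2 ≤
      (1 / 2 * ∫ x in (0 : ℝ)..1, x ^ 2 * v' x ^ 2) + v 1 ^ 2 := by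
  have hint : ∀ {f : ℝ → ℝ}, ContinuousOn f (Icc 0 1) → IntervalIntegrable f volume 0 1 :=
    fun hf ↦ hf.intervalIntegrable_of_Icc zero_le_one
  have hI : IntervalIntegrable (fun x ↦ x ^ 2 * v x ^ 2) volume 0 1 := hint (by fun_prop)
  have hJ : IntervalIntegrable (fun x ↦ x ^ 3 * (v x * v' x)) volume 0 1 := hint (by fun_prop)
  have hK : IntervalIntegrable (fun x ↦ x ^ 2 * v' x ^ 2) volume 0 1 := hint (by fun_prop)
  have hparts := integral_sq_mul_sq_add_cube_mul_mul_deriv zero_le_one hv hv' hderiv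
  rw [intervalIntegral.integral_add hI (hJ.const_mul _),
    intervalIntegral.integral_const_mul] at hparts
  have hcross : ∫ x in (0 : ℝ)..1, -(2 * (x ^ 3 * (v x * v' x))) ≤
      ∫ x in (0 : ℝ)..1, (2 * (x ^ 2 * v x ^ 2) + 1 / 2 * (x ^ 2 * v' x ^ 2)) :=
    intervalIntegral.integral_mono_on zero_le_one (hJ.const_mul 2).neg
      ((hI.const_mul 2).add (hK.const_mul (1 / 2))) fun x hx ↦ neg_two_mul_pow_three_mul_le hx
  rw [intervalIntegral.integral_neg, intervalIntegral.integral_add (hI.const_mul 2)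
    (hK.const_mul _)] at hcross
  simp only [intervalIntegral.integral_const_mul] at hcross
  linarith

end WeightedPoincare

/-- Lemma 1, first inequality: for `v ∈ C¹([0,1])`,
`∫₀¹ x² v(x)² dx ≤ (1/2) ∫₀¹ x² v'(x)² dx + v(1)²`. -/
theorem weighted_poincare (v : ℝ → ℝ) (hv : ContDiffOn ℝ 1 v (Set.Icc 0 1)) :
    (∫ x in (0:ℝ)..1, x ^ 2 * (v x) ^ 2) ≤
      (1 / 2) * (∫ x in (0:ℝ)..1, x ^ 2 * (derivWithin v (Set.Icc 0 1) x) ^ 2) + (v 1) ^ 2 :=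
  integral_sq_mul_sq_le_of_hasDerivAt hv.continuousOn
    (hv.continuousOn_derivWithin (uniqueDiffOn_Icc zero_lt_one) le_rfl)
    fun x hx ↦ (hv.differentiableOn one_ne_zero x (Ioo_subset_Icc_self hx)).hasDerivWithinAt
      |>.hasDerivAt (Icc_mem_nhds hx.1 hx.2)
end

section
/- For every v ∈ C¹([0,1]) and every ε > 0, one has v(1)² ≤ ε ∫₀¹ x² v'(x)² dx + (3 + 1/ε) ∫₀¹ x² v(x)² dx. -/
open MeasureTheory Set intervalIntegral

/-!
Since `x³ v(x)²` vanishes at `0`, `v(1)²` is the integral over `[0,1]` of its derivative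
`3x² v² + 2x³ v v'`. The cross term is split by Young's inequality as
`2 (x² v)(x v') ≤ ε x² v'² + x⁴ v² / ε`, and `x⁴ ≤ x²` on `[0,1]`.
-/

theorem two_mul_le_mul_sq_add_sq_div {ε : ℝ} (hε : 0 < ε) (p q : ℝ) :
    2 * p * q ≤ ε * q ^ 2 + p ^ 2 / ε := by
  have hsq : ε * q ^ 2 + p ^ 2 / ε - 2 * p * q = (ε * q - p) ^ 2 / ε := by
    field_simp
    ring
  rw [← sub_nonneg, hsq]
  positivity

theorem sq_mul_sq_add_cube_mul_le {ε x : ℝ} (hε : 0 < ε) (hx : x ∈ Icc (0 : ℝ) 1)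
    (a b : ℝ) :
    3 * x ^ 2 * a ^ 2 + x ^ 3 * (2 * a * b)
      ≤ ε * (x ^ 2 * b ^ 2) + (3 + 1 / ε) * (x ^ 2 * a ^ 2) := by
  have hx4 : (x ^ 2 * a) ^ 2 / ε ≤ x ^ 2 * a ^ 2 / ε := by
    rw [mul_pow, ← pow_mul]
    have hpow : x ^ (2 * 2) ≤ x ^ 2 := pow_le_pow_of_le_one hx.1 hx.2 (by norm_num)
    gcongr
  calc 3 * x ^ 2 * a ^ 2 + x ^ 3 * (2 * a * b)
      = 3 * x ^ 2 * a ^ 2 + 2 * (x ^ 2 * a) * (x * b) := by ring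
    _ ≤ 3 * x ^ 2 * a ^ 2 + (ε * (x * b) ^ 2 + (x ^ 2 * a) ^ 2 / ε) := by
        grw [two_mul_le_mul_sq_add_sq_div hε]
    _ ≤ ε * (x ^ 2 * b ^ 2) + (3 + 1 / ε) * (x ^ 2 * a ^ 2) := by
        rw [add_mul, one_div_mul_eq_div, mul_pow]
        linarith

theorem integral_deriv_cube_mul_sq {v : ℝ → ℝ} {a b : ℝ} (hab : a < b)
    (hv : ContDiffOn ℝ 1 v (Icc a b)) :
    ∫ x in a..b, (3 * x ^ 2 * v x ^ 2 + x ^ 3 * (2 * v x * derivWithin v (Icc a b) x))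
      = b ^ 3 * v b ^ 2 - a ^ 3 * v a ^ 2 := by
  have hvc := hv.continuousOn
  have hv'c : ContinuousOn (derivWithin v (Icc a b)) (Icc a b) :=
    hv.continuousOn_derivWithin (uniqueDiffOn_Icc hab) le_rfl
  refine integral_eq_sub_of_hasDerivAt_of_le (f := fun x => x ^ 3 * v x ^ 2) hab.le
    (by fun_prop) (fun x hx => ?_) (ContinuousOn.intervalIntegrable_of_Icc hab.le (by fun_prop))
  have hvx : HasDerivAt v (derivWithin v (Icc a b) x) x :=
    ((hv.differentiableOn one_ne_zero x (Ioo_subset_Icc_self hx)).hasDerivWithinAt).hasDerivAt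
      (Icc_mem_nhds hx.1 hx.2)
  simpa using (hasDerivAt_pow 3 x).fun_mul (hvx.fun_pow 2)

/-- Lemma 1, second inequality: for `v ∈ C¹([0,1])` and `ε > 0`,
`v(1)² ≤ ε ∫₀¹ x² v'(x)² dx + (3 + 1/ε) ∫₀¹ x² v(x)² dx`. -/
theorem trace_estimate (v : ℝ → ℝ) (hv : ContDiffOn ℝ 1 v (Set.Icc 0 1))
    (ε : ℝ) (hε : 0 < ε) :
    (v 1) ^ 2 ≤ ε * (∫ x in (0:ℝ)..1, x ^ 2 * (derivWithin v (Set.Icc 0 1) x) ^ 2)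
      + (3 + 1 / ε) * (∫ x in (0:ℝ)..1, x ^ 2 * (v x) ^ 2) := by
  set v' := derivWithin v (Icc 0 1)
  have hvc := hv.continuousOn
  have hv'c : ContinuousOn v' (Icc 0 1) :=
    hv.continuousOn_derivWithin (uniqueDiffOn_Icc zero_lt_one) le_rfl
  have hint {f : ℝ → ℝ} (hf : ContinuousOn f (Icc 0 1)) : IntervalIntegrable f volume 0 1 :=
    hf.intervalIntegrable_of_Icc zero_le_one
  calc v 1 ^ 2 = ∫ x in (0:ℝ)..1, (3 * x ^ 2 * v x ^ 2 + x ^ 3 * (2 * v x * v' x)) := by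
        simpa using (integral_deriv_cube_mul_sq zero_lt_one hv).symm
    _ ≤ ∫ x in (0:ℝ)..1, (ε * (x ^ 2 * v' x ^ 2) + (3 + 1 / ε) * (x ^ 2 * v x ^ 2)) :=
        integral_mono_on zero_le_one (hint (by fun_prop)) (hint (by fun_prop))
          fun x hx => sq_mul_sq_add_cube_mul_le hε hx _ _
    _ = _ := by
        rw [integral_add (hint (by fun_prop)) (hint (by fun_prop)),
          intervalIntegral.integral_const_mul, intervalIntegral.integral_const_mul]
end

section
/- For every v ∈ C¹([0,1]) and every x ∈ [0,1], |x v(x)| ≤ √5 ‖v‖₁, where ‖v‖₁² = ∫₀¹ x²v² dx + ∫₀¹ x²(v')² dx. -/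
open MeasureTheory Set

/-!
Write `A = ∫₀¹ t² v²` and `B = ∫₀¹ t² v'²`. Integrating `(t³ v²)' = 3t² v² + 2t³ v v'` over
`[0, 1]` and using `2t³ v v' ≤ t² (v² + v'²)` gives `v(1)² ≤ 4A + B`. Integrating
`(t² v²)' = 2t v² + 2t² v v' ≥ -t² (v² + v'²)` over `[x, 1]` gives `x² v(x)² ≤ v(1)² + A + B`.
Together, `x² v(x)² ≤ 5A + 2B ≤ 5 (A + B)`.
-/

noncomputable def weightedNormSq (f : ℝ → ℝ) : ℝ :=
  ∫ y in (0:ℝ)..1, y ^ 2 * f y ^ 2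

lemma weightedNormSq_nonneg (f : ℝ → ℝ) : 0 ≤ weightedNormSq f :=
  intervalIntegral.integral_nonneg zero_le_one fun _ _ => by positivity

lemma integral_deriv_weight_mul_sq_eq_sub {w w' v v' : ℝ → ℝ} {a b : ℝ} (hab : a ≤ b)
    (hw : ContinuousOn w (Icc a b)) (hw' : ContinuousOn w' (Icc a b))
    (hv : ContinuousOn v (Icc a b)) (hv' : ContinuousOn v' (Icc a b))
    (hdw : ∀ t ∈ Ioo a b, HasDerivAt w (w' t) t) (hdv : ∀ t ∈ Ioo a b, HasDerivAt v (v' t) t) :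
    ∫ t in a..b, (w' t * v t ^ 2 + w t * (2 * v t * v' t)) = w b * v b ^ 2 - w a * v a ^ 2 := by
  refine intervalIntegral.integral_eq_sub_of_hasDerivAt_of_le (f := fun t => w t * v t ^ 2) hab
    (by fun_prop) (fun t ht => ?_) ?_
  · exact ((hdw t ht).fun_mul ((hdv t ht).fun_pow 2)).congr_deriv (by push_cast; ring)
  · exact ContinuousOn.intervalIntegrable_of_Icc hab (by fun_prop)

lemma three_mul_sq_add_le {t a b : ℝ} (ht₀ : 0 ≤ t) (ht₁ : t ≤ 1) :
    3 * t ^ 2 * a ^ 2 + t ^ 3 * (2 * a * b) ≤ 4 * (t ^ 2 * a ^ 2) + t ^ 2 * b ^ 2 := by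
  have hcube : t ^ 3 ≤ t ^ 2 := pow_le_pow_of_le_one ht₀ ht₁ (by norm_num)
  have hamgm : 2 * a * b ≤ a ^ 2 + b ^ 2 := two_mul_le_add_sq a b
  nlinarith [mul_le_mul_of_nonneg_left hamgm (by positivity : (0:ℝ) ≤ t ^ 3),
    mul_le_mul_of_nonneg_right hcube (by positivity : (0:ℝ) ≤ a ^ 2 + b ^ 2)]

lemma neg_le_two_mul_sq_add {t a b : ℝ} (ht : 0 ≤ t) :
    -(t ^ 2 * a ^ 2 + t ^ 2 * b ^ 2) ≤ 2 * t * a ^ 2 + t ^ 2 * (2 * a * b) := by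
  nlinarith [sq_nonneg (t * a + t * b), mul_nonneg ht (sq_nonneg a)]

section

variable {v v' : ℝ → ℝ} (hv : ContinuousOn v (Icc 0 1)) (hv' : ContinuousOn v' (Icc 0 1))
  (hderiv : ∀ t ∈ Ioo 0 1, HasDerivAt v (v' t) t)
include hv hv' hderiv

lemma sq_apply_one_le : v 1 ^ 2 ≤ 4 * weightedNormSq v + weightedNormSq v' := by
  have hA : IntervalIntegrable (fun t => t ^ 2 * v t ^ 2) volume 0 1 :=
    ContinuousOn.intervalIntegrable_of_Icc zero_le_one (by fun_prop)
  have hB : IntervalIntegrable (fun t => t ^ 2 * v' t ^ 2) volume 0 1 :=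
    ContinuousOn.intervalIntegrable_of_Icc zero_le_one (by fun_prop)
  have hD : IntervalIntegrable (fun t => 3 * t ^ 2 * v t ^ 2 + t ^ 3 * (2 * v t * v' t))
      volume 0 1 :=
    ContinuousOn.intervalIntegrable_of_Icc zero_le_one (by fun_prop)
  have hftc := integral_deriv_weight_mul_sq_eq_sub (w := fun t => t ^ 3)
    (w' := fun t => 3 * t ^ 2) zero_le_one (by fun_prop) (by fun_prop) hv hv'
    (fun t _ => by simpa using hasDerivAt_pow 3 t) hderiv
  calc v 1 ^ 2 = ∫ t in (0:ℝ)..1, (3 * t ^ 2 * v t ^ 2 + t ^ 3 * (2 * v t * v' t)) := by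
        simp [hftc]
    _ ≤ ∫ t in (0:ℝ)..1, (4 * (t ^ 2 * v t ^ 2) + t ^ 2 * v' t ^ 2) :=
        intervalIntegral.integral_mono_on zero_le_one hD ((hA.const_mul 4).add hB)
          fun t ht => three_mul_sq_add_le ht.1 ht.2
    _ = 4 * weightedNormSq v + weightedNormSq v' := by
        rw [intervalIntegral.integral_add (hA.const_mul 4) hB,
          intervalIntegral.integral_const_mul]
        rfl

lemma sq_mul_apply_le {x : ℝ} (hx : x ∈ Icc (0:ℝ) 1) :
    (x * v x) ^ 2 ≤ v 1 ^ 2 + (weightedNormSq v + weightedNormSq v') := by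
  have hsub : Icc x 1 ⊆ Icc 0 1 := Icc_subset_Icc hx.1 le_rfl
  have hvx := hv.mono hsub
  have hvx' := hv'.mono hsub
  have hE : IntervalIntegrable (fun t => t ^ 2 * v t ^ 2 + t ^ 2 * v' t ^ 2) volume 0 1 :=
    ContinuousOn.intervalIntegrable_of_Icc zero_le_one (by fun_prop)
  have hE' : IntervalIntegrable (fun t => t ^ 2 * v t ^ 2 + t ^ 2 * v' t ^ 2) volume x 1 :=
    ContinuousOn.intervalIntegrable_of_Icc hx.2 (by fun_prop)
  have hD : IntervalIntegrable (fun t => 2 * t * v t ^ 2 + t ^ 2 * (2 * v t * v' t)) volume x 1 :=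
    ContinuousOn.intervalIntegrable_of_Icc hx.2 (by fun_prop)
  have hftc := integral_deriv_weight_mul_sq_eq_sub (w := fun t => t ^ 2) (w' := fun t => 2 * t)
    hx.2 (by fun_prop) (by fun_prop) hvx hvx'
    (fun t _ => by simpa using hasDerivAt_pow 2 t)
    (fun t ht => hderiv t ⟨hx.1.trans_lt ht.1, ht.2⟩)
  have hlower : -∫ t in x..1, (t ^ 2 * v t ^ 2 + t ^ 2 * v' t ^ 2)
      ≤ ∫ t in x..1, (2 * t * v t ^ 2 + t ^ 2 * (2 * v t * v' t)) := by
    rw [← intervalIntegral.integral_neg]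
    exact intervalIntegral.integral_mono_on hx.2 hE'.neg hD
      fun t ht => neg_le_two_mul_sq_add (hx.1.trans ht.1)
  have htail : ∫ t in x..1, (t ^ 2 * v t ^ 2 + t ^ 2 * v' t ^ 2)
      ≤ weightedNormSq v + weightedNormSq v' := by
    calc _ ≤ ∫ t in (0:ℝ)..1, (t ^ 2 * v t ^ 2 + t ^ 2 * v' t ^ 2) :=
          intervalIntegral.integral_mono_interval hx.1 hx.2 le_rfl
            (Filter.Eventually.of_forall fun t => by positivity) hE
      _ = _ := intervalIntegral.integral_add
          (ContinuousOn.intervalIntegrable_of_Icc zero_le_one (by fun_prop))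
          (ContinuousOn.intervalIntegrable_of_Icc zero_le_one (by fun_prop))
  rw [mul_pow]
  linarith

lemma sq_mul_apply_le_five_mul {x : ℝ} (hx : x ∈ Icc (0:ℝ) 1) :
    (x * v x) ^ 2 ≤ 5 * (weightedNormSq v + weightedNormSq v') := by
  linarith [sq_apply_one_le hv hv' hderiv, sq_mul_apply_le hv hv' hderiv hx,
    weightedNormSq_nonneg v, weightedNormSq_nonneg v']

end

/-- Lemma 1, fourth inequality: for `v ∈ C¹([0,1])` and `x ∈ [0,1]`,
`|x v(x)| ≤ √5 ‖v‖₁`, where `‖v‖₁² = ∫₀¹ x² v² dx + ∫₀¹ x² (v')² dx`. -/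
theorem pointwise_bound_V_norm (v : ℝ → ℝ) (hv : ContDiffOn ℝ 1 v (Set.Icc 0 1))
    (x : ℝ) (hx : x ∈ Set.Icc (0:ℝ) 1) :
    |x * v x| ≤ Real.sqrt 5 * Real.sqrt ((∫ y in (0:ℝ)..1, y ^ 2 * (v y) ^ 2)
      + ∫ y in (0:ℝ)..1, y ^ 2 * (derivWithin v (Set.Icc 0 1) y) ^ 2) := by
  have hderiv : ∀ t ∈ Ioo (0:ℝ) 1, HasDerivAt v (derivWithin v (Icc 0 1) t) t := fun t ht =>
    ((hv.differentiableOn one_ne_zero t (Ioo_subset_Icc_self ht)).hasDerivWithinAt).hasDerivAt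
      (Icc_mem_nhds ht.1 ht.2)
  have hsq := sq_mul_apply_le_five_mul hv.continuousOn
    (hv.continuousOn_derivWithin (uniqueDiffOn_Icc one_pos) le_rfl) hderiv hx
  calc |x * v x| = Real.sqrt ((x * v x) ^ 2) := (Real.sqrt_sq_eq_abs _).symm
    _ ≤ Real.sqrt (5 * _) := Real.sqrt_le_sqrt hsq
    _ = _ := Real.sqrt_mul (by norm_num) _
end

section
/- On the weighted Sobolev space V, the quantity (‖v'‖₀² + v(1)²)^{1/2} defines a norm equivalent to ‖v‖₁; precisely, (2/3)‖v‖₁² ≤ v(1)² + ‖v'‖₀² ≤ 5‖v‖₁² for all v ∈ V. -/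
/-!
Integrating `(x³ v²)' = 3 x² v² + 2 x³ v v'` over `[0, 1]` gives
`v(1)² = 3 ‖v‖₀² + ∫₀¹ 2 x³ v v'`, and the cross term is at most `‖v‖₀² + ‖v'‖₀²` in absolute
value because `2 |x³ v v'| ≤ x² v² + x⁴ v'²`. Hence `2 ‖v‖₀² - ‖v'‖₀² ≤ v(1)² ≤ 4 ‖v‖₀² + ‖v'‖₀²`,
and both inequalities follow.
-/

open MeasureTheory Set

theorem integral_cube_mul_sq_deriv {v : ℝ → ℝ} {a b : ℝ} (hab : a < b)
    (hv : ContDiffOn ℝ 1 v (Icc a b)) :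
    ∫ x in a..b, (3 * (x ^ 2 * v x ^ 2) + 2 * x ^ 3 * v x * derivWithin v (Icc a b) x) =
      b ^ 3 * v b ^ 2 - a ^ 3 * v a ^ 2 := by
  have hF : ContDiffOn ℝ 1 (fun x => x ^ 3 * v x ^ 2) (Icc a b) :=
    (contDiffOn_id.pow 3).mul (hv.pow 2)
  rw [← intervalIntegral.integral_derivWithin_Icc_of_contDiffOn_Icc hF hab.le]
  refine intervalIntegral.integral_congr fun x hx => ?_
  rw [uIcc_of_le hab.le] at hx
  have hvx := ((hv.differentiableOn one_ne_zero) x hx).hasDerivWithinAt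
  rw [(((hasDerivAt_pow 3 x).hasDerivWithinAt.fun_mul (hvx.fun_pow 2)).derivWithin
    (uniqueDiffOn_Icc hab x hx))]
  push_cast
  ring

theorem abs_two_mul_cube_mul_mul_le {x : ℝ} (hx : |x| ≤ 1) (a b : ℝ) :
    |2 * x ^ 3 * a * b| ≤ x ^ 2 * a ^ 2 + x ^ 2 * b ^ 2 := by
  have hx2 : x ^ 2 ≤ 1 := (sq_le_one_iff_abs_le_one x).2 hx
  have htail : x ^ 2 * (x ^ 2 * b ^ 2) ≤ x ^ 2 * b ^ 2 :=
    mul_le_of_le_one_left (by positivity) hx2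
  rw [abs_le]
  constructor
  · nlinarith [mul_nonneg (sq_nonneg x) (sq_nonneg (a + x * b))]
  · nlinarith [mul_nonneg (sq_nonneg x) (sq_nonneg (a - x * b))]

theorem abs_integral_two_mul_cube_mul_mul_le {f g : ℝ → ℝ} (hf : ContinuousOn f (Icc 0 1))
    (hg : ContinuousOn g (Icc 0 1)) :
    |∫ x in (0 : ℝ)..1, 2 * x ^ 3 * f x * g x| ≤
      (∫ x in (0 : ℝ)..1, x ^ 2 * f x ^ 2) + ∫ x in (0 : ℝ)..1, x ^ 2 * g x ^ 2 := by
  have hf2 : IntervalIntegrable (fun x => x ^ 2 * f x ^ 2) volume 0 1 :=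
    ContinuousOn.intervalIntegrable_of_Icc zero_le_one (by fun_prop)
  have hg2 : IntervalIntegrable (fun x => x ^ 2 * g x ^ 2) volume 0 1 :=
    ContinuousOn.intervalIntegrable_of_Icc zero_le_one (by fun_prop)
  rw [← intervalIntegral.integral_add hf2 hg2]
  refine (intervalIntegral.abs_integral_le_integral_abs zero_le_one).trans
    (intervalIntegral.integral_mono_on zero_le_one ?_ (hf2.add hg2) fun x hx => ?_)
  · exact ContinuousOn.intervalIntegrable_of_Icc zero_le_one (by fun_prop)
  · exact abs_two_mul_cube_mul_mul_le (abs_le.2 ⟨by linarith [hx.1], hx.2⟩) _ _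

/-- Remark 1: on `V`, `(‖v'‖₀² + v(1)²)^{1/2}` is a norm equivalent to `‖v‖₁`:
`(2/3)‖v‖₁² ≤ v(1)² + ‖v'‖₀² ≤ 5‖v‖₁²`, with `‖v‖₁² = ‖v‖₀² + ‖v'‖₀²` and
`‖v‖₀² = ∫₀¹ x² v² dx`. -/
theorem equivalent_norms (v : ℝ → ℝ) (hv : ContDiffOn ℝ 1 v (Set.Icc 0 1)) :
    (2 / 3) * ((∫ x in (0:ℝ)..1, x ^ 2 * (v x) ^ 2)
        + ∫ x in (0:ℝ)..1, x ^ 2 * (derivWithin v (Set.Icc 0 1) x) ^ 2) ≤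
      (v 1) ^ 2 + (∫ x in (0:ℝ)..1, x ^ 2 * (derivWithin v (Set.Icc 0 1) x) ^ 2) ∧
    (v 1) ^ 2 + (∫ x in (0:ℝ)..1, x ^ 2 * (derivWithin v (Set.Icc 0 1) x) ^ 2) ≤
      5 * ((∫ x in (0:ℝ)..1, x ^ 2 * (v x) ^ 2)
        + ∫ x in (0:ℝ)..1, x ^ 2 * (derivWithin v (Set.Icc 0 1) x) ^ 2) := by
  have hid := integral_cube_mul_sq_deriv zero_lt_one hv
  set v' := derivWithin v (Icc 0 1)
  have hv' : ContinuousOn v' (Icc 0 1) :=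
    hv.continuousOn_derivWithin uniqueDiffOn_Icc_zero_one le_rfl
  have hvc := hv.continuousOn
  rw [intervalIntegral.integral_add
      (ContinuousOn.intervalIntegrable_of_Icc zero_le_one (by fun_prop))
      (ContinuousOn.intervalIntegrable_of_Icc zero_le_one (by fun_prop)),
    intervalIntegral.integral_const_mul] at hid
  have hcross := abs_le.1 (abs_integral_two_mul_cube_mul_mul_le hvc hv')
  have hA : 0 ≤ ∫ x in (0:ℝ)..1, x ^ 2 * v x ^ 2 :=
    intervalIntegral.integral_nonneg zero_le_one fun x _ => by positivity
  have hB : 0 ≤ ∫ x in (0:ℝ)..1, x ^ 2 * v' x ^ 2 :=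
    intervalIntegral.integral_nonneg zero_le_one fun x _ => by positivity
  rw [one_pow, one_mul, zero_pow three_ne_zero, zero_mul, sub_zero] at hid
  constructor <;> linarith [sq_nonneg (v 1)]
end

section
/- Let C₁, C₂ > 0 and α = α(t,r) = 4(r − C₁t)√3 C₂ t with |α| ≤ 1, and define v_G(t,r) = (1/(4√3 C₂ t))[C₁ + (√3/(12t²C₂))(α + √(1−α) − √(1+α))] for t > 0. Then for all α ∈ [−1,1], √3(α + √(1−α) − √(1+α)) ≥ −√6; consequently v_G(t,r) > 0 whenever 12 C₁ C₂ t² ≥ √6. -/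
open Set

/- On `[-1, 0)` one has `√(1 - a) > 1 > -a`; on `[0, 1]` both summands are nonnegative and
not both zero. -/
lemma add_sqrt_one_sub_pos {a : ℝ} (h₁ : -1 ≤ a) (h₂ : a ≤ 1) : 0 < a + √(1 - a) := by
  have hsq : √(1 - a) ^ 2 = 1 - a := Real.sq_sqrt (by linarith)
  nlinarith [Real.sqrt_nonneg (1 - a)]

lemma neg_sqrt_two_lt_add_sqrt_sub_sqrt {a : ℝ} (h₁ : -1 ≤ a) (h₂ : a ≤ 1) :
    -√2 < a + √(1 - a) - √(1 + a) := by
  have : √(1 + a) ≤ √2 := Real.sqrt_le_sqrt (by linarith)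
  linarith [add_sqrt_one_sub_pos h₁ h₂]

lemma neg_sqrt_six_lt_sqrt_three_mul {a : ℝ} (h₁ : -1 ≤ a) (h₂ : a ≤ 1) :
    -√6 < √3 * (a + √(1 - a) - √(1 + a)) := by
  rw [show (6 : ℝ) = 3 * 2 by norm_num, Real.sqrt_mul (by norm_num), ← mul_neg]
  exact mul_lt_mul_of_pos_left (neg_sqrt_two_lt_add_sqrt_sub_sqrt h₁ h₂) (by positivity)

theorem gas_velocity_positive_general (C₁ C₂ t r : ℝ) (hC₂ : 0 < C₂) (ht : 0 < t)
    (hα : |4 * (r - C₁ * t) * Real.sqrt 3 * C₂ * t| ≤ 1) :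
    (∀ a ∈ Set.Icc (-1 : ℝ) 1,
      -Real.sqrt 6 ≤ Real.sqrt 3 * (a + Real.sqrt (1 - a) - Real.sqrt (1 + a))) ∧
    (Real.sqrt 6 ≤ 12 * C₁ * C₂ * t ^ 2 →
      0 < (1 / (4 * Real.sqrt 3 * C₂ * t)) *
        (C₁ + (Real.sqrt 3 / (12 * t ^ 2 * C₂)) *
          (4 * (r - C₁ * t) * Real.sqrt 3 * C₂ * t
            + Real.sqrt (1 - 4 * (r - C₁ * t) * Real.sqrt 3 * C₂ * t)
            - Real.sqrt (1 + 4 * (r - C₁ * t) * Real.sqrt 3 * C₂ * t)))) := by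
  refine ⟨fun a ha => (neg_sqrt_six_lt_sqrt_three_mul ha.1 ha.2).le, fun hC => ?_⟩
  set α := 4 * (r - C₁ * t) * √3 * C₂ * t
  set E := α + √(1 - α) - √(1 + α)
  have hE : -√6 < √3 * E := neg_sqrt_six_lt_sqrt_three_mul (abs_le.mp hα).1 (abs_le.mp hα).2
  have hinner : C₁ + √3 / (12 * t ^ 2 * C₂) * E =
      (12 * C₁ * C₂ * t ^ 2 + √3 * E) / (12 * t ^ 2 * C₂) := by
    field_simp
  rw [hinner]
  exact mul_pos (by positivity) (div_pos (by linarith) (by positivity))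

/-- For all `α ∈ [−1,1]`, `√3(α + √(1−α) − √(1+α)) ≥ −√6`; consequently the gas velocity
`v_G(t,r) = (1/(4√3 C₂ t))[C₁ + (√3/(12t²C₂))(α + √(1−α) − √(1+α))]`, with
`α = 4(r − C₁t)√3 C₂ t`, `|α| ≤ 1`, is positive whenever `12 C₁ C₂ t² ≥ √6`. -/
theorem gas_velocity_positive (C₁ C₂ t r : ℝ) (hC₁ : 0 < C₁) (hC₂ : 0 < C₂) (ht : 0 < t)
    (hα : |4 * (r - C₁ * t) * Real.sqrt 3 * C₂ * t| ≤ 1) :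
    (∀ a ∈ Set.Icc (-1 : ℝ) 1,
      -Real.sqrt 6 ≤ Real.sqrt 3 * (a + Real.sqrt (1 - a) - Real.sqrt (1 + a))) ∧
    (Real.sqrt 6 ≤ 12 * C₁ * C₂ * t ^ 2 →
      0 < (1 / (4 * Real.sqrt 3 * C₂ * t)) *
        (C₁ + (Real.sqrt 3 / (12 * t ^ 2 * C₂)) *
          (4 * (r - C₁ * t) * Real.sqrt 3 * C₂ * t
            + Real.sqrt (1 - 4 * (r - C₁ * t) * Real.sqrt 3 * C₂ * t)
            - Real.sqrt (1 + 4 * (r - C₁ * t) * Real.sqrt 3 * C₂ * t)))) :=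
  gas_velocity_positive_general C₁ C₂ t r hC₂ ht hα
end
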